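/- For a ≡ 4 (mod 6), there exists a family of (a² − 2a + 4)/6 triples on the set {1,...,a} such that the pairs not covered by any of these triples form a set of (a−2)/2 pairwise disjoint pairs. -/

import Mathlib

open Finset

/-- `T` is a family of 3-element subsets of `A`. -/
def IsTripleFamily {α : Type*} [DecidableEq α] (A : Finset α) (T : Finset (Finset α)) : Prop :=
  ∀ t ∈ T, t ⊆ A ∧ t.card = 3

/-- The 2-element subsets of `A` not contained in any member of `T`. -/
def uncoveredPairs {α : Type*} [DecidableEq α] (A : Finset α) (T : Finset (Finset α)) :
    Finset (Finset α) :=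
  (A.powersetCard 2).filter fun p => ∀ t ∈ T, ¬ p ⊆ t

/-- The weight of a triple family: number of triples plus half the number of uncovered pairs. -/
def weight {α : Type*} [DecidableEq α] (A : Finset α) (T : Finset (Finset α)) : ℚ :=
  T.card + (uncoveredPairs A T).card / 2

/-- `C_*(a)`: the minimum weight of a triple family on an `a`-element set
(computed as half the minimum of the doubled weights, which are natural numbers). -/
noncomputable def Cstar2 (a : ℕ) : ℕ :=
  sInf {n : ℕ | ∃ T : Finset (Finset ℕ), IsTripleFamily (Finset.range a) T ∧
      2 * T.card + (uncoveredPairs (Finset.range a) T).card = n}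

noncomputable def Cstar (a : ℕ) : ℚ := (Cstar2 a : ℚ) / 2

/-- `T` is a covering of the pairs of `A` by triples. -/
def IsCover {α : Type*} [DecidableEq α] (A : Finset α) (T : Finset (Finset α)) : Prop :=
  IsTripleFamily A T ∧ ∀ p ⊆ A, p.card = 2 → ∃ t ∈ T, p ⊆ t

/-- `C(a) = C(a,3,2)`: the minimum size of a covering of pairs by triples on `a` elements. -/
noncomputable def coverNum (a : ℕ) : ℕ :=
  sInf {n | ∃ T : Finset (Finset ℕ), IsCover (Finset.range a) T ∧ T.card = n}

/-- An `(A,B)`-system: a family of 4-element subsets of `A ∪ B` covering every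
3-element subset with at least two elements in `A`. -/
def IsABSystem {α : Type*} [DecidableEq α] (A B : Finset α) (Q : Finset (Finset α)) : Prop :=
  (∀ q ∈ Q, q ⊆ A ∪ B ∧ q.card = 4) ∧
  ∀ T ⊆ A ∪ B, T.card = 3 → 2 ≤ (T ∩ A).card → ∃ q ∈ Q, T ⊆ q

/-- `f(a,b)`: the minimum size of an `(A,B)`-system with `|A| = a`, `|B| = b`. -/
noncomputable def fAB (a b : ℕ) : ℕ :=
  sInf {n | ∃ Q : Finset (Finset ℕ),
    IsABSystem (Finset.range a) (Finset.Ico a (a + b)) Q ∧ Q.card = n}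



/-!
Write `a = n + 4` with `6 ∣ n`, and call the four extra points the hole. The heart of the proof
is a triangle decomposition of `K_{n+4}` minus the `K₄` on the hole and a perfect matching of the
other `n` points. Adding the triangles `{h₀, h₁, h₂}` and `{h₀, h₁, h₃}` on the hole leaves
uncovered exactly `{h₂, h₃}` and the `n / 2` edges of the matching, and double counting the pairs
gives the number of triangles.

Such decompositions exist for `n = 6` and `n = 12` (explicit tables, checked by `decide`), and if
every group of a 3-GDD carries one, filling the groups yields one on the whole point set. The
3-GDDs of types `6ᵘ` and `12ᵘ` (`u` odd) come from inflating Bose's GDD of type `3ᵘ` by `2` or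
`4`, and those of type `(6j)⁴` from inflating the GDD of type `2⁴` by `3j`; this reaches `n = 6k`
for `k` odd, `k ≡ 2 [MOD 4]` and, by induction, `k = 4j`.
-/

variable {α β : Type*}

theorem Finset.exists_third_of_card_eq_three [DecidableEq α] {s : Finset α} (hs : s.card = 3)
    {x y : α} (hx : x ∈ s) (hy : y ∈ s) (hxy : x ≠ y) : ∃ z, z ≠ x ∧ z ≠ y ∧ s = {x, y, z} := by
  obtain ⟨z, hz⟩ : ∃ z, (s.erase x).erase y = {z} := by
    rw [← card_eq_one, card_erase_of_mem (mem_erase.2 ⟨hxy.symm, hy⟩), card_erase_of_mem hx, hs]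
  have hzs : z ∈ (s.erase x).erase y := by simp [hz]
  refine ⟨z, (mem_erase.1 (mem_erase.1 hzs).2).1, (mem_erase.1 hzs).1, ?_⟩
  rw [← insert_erase hx, ← insert_erase (mem_erase.2 ⟨hxy.symm, hy⟩), hz]

theorem Finset.sum_triple {γ : Type*} [AddCommMonoid γ] [DecidableEq α] {x y z : α}
    (hxy : x ≠ y) (hxz : x ≠ z) (hyz : y ≠ z) (f : α → γ) :
    ∑ p ∈ {x, y, z}, f p = f x + f y + f z := by
  rw [sum_insert (by simp [hxy, hxz]), sum_pair hyz, add_assoc]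

section UncoveredPairs

variable [DecidableEq α] [DecidableEq β]

theorem mem_uncoveredPairs {A : Finset α} {T : Finset (Finset α)} {p : Finset α} :
    p ∈ uncoveredPairs A T ↔ p ⊆ A ∧ p.card = 2 ∧ ∀ t ∈ T, ¬ p ⊆ t := by
  simp [uncoveredPairs, and_assoc]

theorem uncoveredPairs_insert (A : Finset α) (T : Finset (Finset α)) (t : Finset α) :
    uncoveredPairs A (insert t T) = (uncoveredPairs A T).filter fun p => ¬ p ⊆ t := by
  ext p
  simp only [uncoveredPairs, mem_filter, mem_insert, forall_eq_or_imp]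
  tauto

theorem uncoveredPairs_map (f : α ↪ β) (A : Finset α) (T : Finset (Finset α)) :
    uncoveredPairs (A.map f) (T.map (mapEmbedding f).toEmbedding) =
      (uncoveredPairs A T).map (mapEmbedding f).toEmbedding := by
  simp only [uncoveredPairs, powersetCard_map, filter_map]
  congr 1
  ext p
  simp [map_subset_map]

theorem IsTripleFamily.map {A : Finset α} {T : Finset (Finset α)} (h : IsTripleFamily A T)
    (f : α ↪ β) : IsTripleFamily (A.map f) (T.map (mapEmbedding f).toEmbedding) := by
  simp only [IsTripleFamily, mem_map, RelEmbedding.coe_toEmbedding, mapEmbedding_apply]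
  rintro _ ⟨t, ht, rfl⟩
  exact ⟨map_subset_map.2 (h t ht).1, by rw [card_map, (h t ht).2]⟩

end UncoveredPairs

/-- `L` is the leave: the pairs lying in no triangle of `T`. -/
structure IsTriangleDecomposition (L : α → α → Prop) (T : Finset (Finset α)) : Prop where
  card_eq_three : ∀ t ∈ T, t.card = 3
  eq_of_mem : ∀ t ∈ T, ∀ t' ∈ T, ∀ x y, x ≠ y → x ∈ t → y ∈ t → x ∈ t' → y ∈ t' → t = t'
  exists_mem_iff : ∀ x y, x ≠ y → ((∃ t ∈ T, x ∈ t ∧ y ∈ t) ↔ ¬ L x y)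

namespace IsTriangleDecomposition

variable {L L' : α → α → Prop} {T T' : Finset (Finset α)}

theorem not_mem_of_leave (h : IsTriangleDecomposition L T) {x y : α} (hxy : x ≠ y) (hL : L x y)
    {t : Finset α} (hx : x ∈ t) (hy : y ∈ t) : t ∉ T :=
  fun ht => (h.exists_mem_iff x y hxy).1 ⟨t, ht, hx, hy⟩ hL

theorem congr (h : IsTriangleDecomposition L T) (hL : ∀ x y, x ≠ y → (L x y ↔ L' x y)) :
    IsTriangleDecomposition L' T :=
  ⟨h.card_eq_three, h.eq_of_mem, fun x y hxy => (h.exists_mem_iff x y hxy).trans (hL x y hxy).not⟩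

theorem map (h : IsTriangleDecomposition L T) (f : α ↪ β) :
    IsTriangleDecomposition (fun x y => ∀ a b, f a = x → f b = y → L a b)
      (T.map (mapEmbedding f).toEmbedding) := by
  have hmem : ∀ {s : Finset β}, s ∈ T.map (mapEmbedding f).toEmbedding ↔ ∃ t ∈ T, t.map f = s := by
    simp
  refine ⟨?_, ?_, fun x y hxy => ?_⟩
  · simp only [hmem]
    rintro _ ⟨t, ht, rfl⟩
    rw [card_map, h.card_eq_three t ht]
  · simp only [hmem]
    rintro _ ⟨t, ht, rfl⟩ _ ⟨t', ht', rfl⟩ _ _ hxy hx hy hx' hy'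
    obtain ⟨a, ha, rfl⟩ := mem_map.1 hx
    obtain ⟨b, hb, rfl⟩ := mem_map.1 hy
    rw [mem_map' f] at hx' hy'
    rw [h.eq_of_mem t ht t' ht' a b (f.injective.ne_iff.1 hxy) ha hb hx' hy']
  · simp only [hmem, not_forall]
    constructor
    · rintro ⟨_, ⟨t, ht, rfl⟩, hx, hy⟩
      obtain ⟨a, ha, rfl⟩ := mem_map.1 hx
      obtain ⟨b, hb, rfl⟩ := mem_map.1 hy
      exact ⟨a, b, rfl, rfl, (h.exists_mem_iff a b (f.injective.ne_iff.1 hxy)).1 ⟨t, ht, ha, hb⟩⟩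
    · rintro ⟨a, b, rfl, rfl, hab⟩
      obtain ⟨t, ht, ha, hb⟩ := (h.exists_mem_iff a b (f.injective.ne_iff.1 hxy)).2 hab
      exact ⟨_, ⟨t, ht, rfl⟩, mem_map_of_mem f ha, mem_map_of_mem f hb⟩

theorem union [DecidableEq α] (h : IsTriangleDecomposition L T)
    (h' : IsTriangleDecomposition L' T') (hdisj : ∀ x y, x ≠ y → L x y ∨ L' x y) :
    IsTriangleDecomposition (fun x y => L x y ∧ L' x y) (T ∪ T') := by
  refine ⟨?_, ?_, fun x y hxy => ?_⟩
  · simp only [mem_union]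
    rintro t (ht | ht)
    exacts [h.card_eq_three t ht, h'.card_eq_three t ht]
  · simp only [mem_union]
    rintro t (ht | ht) t' (ht' | ht') x y hxy hx hy hx' hy'
    · exact h.eq_of_mem t ht t' ht' x y hxy hx hy hx' hy'
    · exact ((hdisj x y hxy).elim (h.not_mem_of_leave hxy · hx hy ht)
        (h'.not_mem_of_leave hxy · hx' hy' ht')).elim
    · exact ((hdisj x y hxy).elim (h.not_mem_of_leave hxy · hx' hy' ht')
        (h'.not_mem_of_leave hxy · hx hy ht)).elim
    · exact h'.eq_of_mem t ht t' ht' x y hxy hx hy hx' hy'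
  · simp only [mem_union, or_and_right, exists_or, h.exists_mem_iff x y hxy,
      h'.exists_mem_iff x y hxy, not_and_or]

theorem biUnion [DecidableEq α] {ι : Type*} (s : Finset ι) {L : ι → α → α → Prop}
    {T : ι → Finset (Finset α)} (h : ∀ i ∈ s, IsTriangleDecomposition (L i) (T i))
    (hdisj : ∀ i ∈ s, ∀ j ∈ s, i ≠ j → ∀ x y, x ≠ y → L i x y ∨ L j x y) :
    IsTriangleDecomposition (fun x y => ∀ i ∈ s, L i x y) (s.biUnion T) := by
  refine ⟨?_, ?_, fun x y hxy => ?_⟩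
  · simp only [mem_biUnion]
    rintro t ⟨i, hi, ht⟩
    exact (h i hi).card_eq_three t ht
  · simp only [mem_biUnion]
    rintro t ⟨i, hi, ht⟩ t' ⟨j, hj, ht'⟩ x y hxy hx hy hx' hy'
    obtain rfl | hij := eq_or_ne i j
    · exact (h i hi).eq_of_mem t ht t' ht' x y hxy hx hy hx' hy'
    · exact ((hdisj i hi j hj hij x y hxy).elim ((h i hi).not_mem_of_leave hxy · hx hy ht)
        ((h j hj).not_mem_of_leave hxy · hx' hy' ht')).elim
  · simp only [mem_biUnion, not_forall]
    constructor
    · rintro ⟨t, ⟨i, hi, ht⟩, hx, hy⟩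
      exact ⟨i, hi, ((h i hi).exists_mem_iff x y hxy).1 ⟨t, ht, hx, hy⟩⟩
    · rintro ⟨i, hi, hL⟩
      obtain ⟨t, ht, hx, hy⟩ := ((h i hi).exists_mem_iff x y hxy).2 hL
      exact ⟨t, ⟨i, hi, ht⟩, hx, hy⟩

/-- The hypotheses are decidable when `T` is an explicit table on `ℕ`. -/
theorem of_embedding [Fintype α] [DecidableEq β] (f : α ↪ β) {T : Finset (Finset β)}
    (h3 : ∀ t ∈ T, t.card = 3) (hinter : ∀ t ∈ T, ∀ t' ∈ T, t ≠ t' → (t ∩ t').card ≤ 1)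
    (hrange : ∀ t ∈ T, ∀ x ∈ t, ∃ a, f a = x)
    (hcov : ∀ a b, a ≠ b → ((∃ t ∈ T, f a ∈ t ∧ f b ∈ t) ↔ ¬ L a b)) :
    IsTriangleDecomposition L (univ.filter fun s : Finset α => s.map f ∈ T) := by
  have hmem : ∀ s, s ∈ univ.filter (fun s : Finset α => s.map f ∈ T) ↔ s.map f ∈ T := by simp
  refine ⟨fun s hs => card_map f ▸ h3 _ ((hmem s).1 hs), ?_, fun a b hab => ?_⟩
  · intro s hs s' hs' a b hab ha hb ha' hb'
    by_contra hne
    have hlt : 1 < (s.map f ∩ s'.map f).card := one_lt_card.2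
      ⟨f a, by simp [ha, ha'], f b, by simp [hb, hb'], f.injective.ne hab⟩
    exact (hinter _ ((hmem s).1 hs) _ ((hmem s').1 hs') (fun h => hne (map_injective f h))).not_gt
      hlt
  · rw [← hcov a b hab]
    simp only [hmem]
    constructor
    · rintro ⟨s, hs, ha, hb⟩
      exact ⟨_, hs, mem_map_of_mem f ha, mem_map_of_mem f hb⟩
    · rintro ⟨t, ht, ha, hb⟩
      have hmap : (univ.filter fun c => f c ∈ t).map f = t := by
        ext x
        simp only [mem_map, mem_filter, mem_univ, true_and]
        refine ⟨by rintro ⟨c, hc, rfl⟩; exact hc, fun hx => ?_⟩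
        obtain ⟨c, rfl⟩ := hrange t ht x hx
        exact ⟨c, hx, rfl⟩
      exact ⟨_, hmap ▸ ht, by simpa using ha, by simpa using hb⟩

variable [Fintype α] [DecidableEq α]

theorem pair_mem_uncoveredPairs_iff (h : IsTriangleDecomposition L T) {x y : α} (hxy : x ≠ y) :
    {x, y} ∈ uncoveredPairs univ T ↔ L x y := by
  rw [← not_not (a := L x y), ← h.exists_mem_iff x y hxy]
  simp [uncoveredPairs, card_pair hxy, insert_subset_iff]

theorem three_mul_card_add_card_uncoveredPairs (h : IsTriangleDecomposition L T) :
    3 * T.card + (uncoveredPairs univ T).card = (Fintype.card α).choose 2 := by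
  have hcovered : (univ.powersetCard 2).filter (fun p => ∃ t ∈ T, p ⊆ t) =
      T.biUnion (powersetCard 2) := by
    ext p
    simp only [mem_filter, mem_powersetCard, subset_univ, true_and, mem_biUnion]
    exact ⟨fun ⟨hp, t, ht, hpt⟩ => ⟨t, ht, hpt, hp⟩, fun ⟨t, ht, hpt, hp⟩ => ⟨hp, t, ht, hpt⟩⟩
  have hdisj : (T : Set (Finset α)).PairwiseDisjoint (powersetCard 2) := by
    intro t ht t' ht' hne
    refine disjoint_left.2 fun p hp hp' => hne ?_
    rw [mem_powersetCard] at hp hp'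
    obtain ⟨x, y, hxy, rfl⟩ := card_eq_two.1 hp.2
    exact h.eq_of_mem t ht t' ht' x y hxy (hp.1 (by simp)) (hp.1 (by simp)) (hp'.1 (by simp))
      (hp'.1 (by simp))
  have hcard : (T.biUnion (powersetCard 2)).card = 3 * T.card := by
    rw [card_biUnion hdisj, mul_comm, sum_const_nat]
    intro t ht
    rw [card_powersetCard, h.card_eq_three t ht]
    rfl
  have huncov : uncoveredPairs univ T =
      (univ.powersetCard 2).filter (fun p => ¬ ∃ t ∈ T, p ⊆ t) := by
    ext p
    simp [uncoveredPairs]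
  rw [← hcard, ← hcovered, huncov, card_filter_add_card_filter_not, card_powersetCard,
    card_univ]

end IsTriangleDecomposition

section GroupDivisibleDesign

variable {V G M : Type*}

abbrev IsGDD (T : Finset (Finset (V × G))) : Prop :=
  IsTriangleDecomposition (fun x y => x.2 = y.2) T

variable [DecidableEq V] [DecidableEq G] [Fintype V] [Fintype G]
  [AddCommGroup M] [Fintype M] [DecidableEq M]

/-- Inflation by the Latin square `(a, b) ↦ -(a + b)` of `M`: each triangle becomes `|M|²`
triangles. -/
def inflate (M : Type*) [AddCommGroup M] [Fintype M] [DecidableEq M]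
    (T : Finset (Finset (V × G))) : Finset (Finset ((V × M) × G)) :=
  univ.filter fun s => s.card = 3 ∧ s.image (Prod.map Prod.fst id) ∈ T ∧ ∑ x ∈ s, x.1.2 = 0

theorem mem_inflate {T : Finset (Finset (V × G))} {s : Finset ((V × M) × G)} :
    s ∈ inflate M T ↔ s.card = 3 ∧ s.image (Prod.map Prod.fst id) ∈ T ∧ ∑ x ∈ s, x.1.2 = 0 := by
  simp [inflate]

namespace IsGDD

variable {T : Finset (Finset (V × G))}

theorem injOn_of_mem_inflate (hT : IsGDD T) {s : Finset ((V × M) × G)} (hs : s ∈ inflate M T) :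
    Set.InjOn (Prod.map Prod.fst id) (s : Set ((V × M) × G)) := by
  obtain ⟨h3, hsT, -⟩ := mem_inflate.1 hs
  rw [← card_image_iff, h3, hT.card_eq_three _ hsT]

theorem exists_mem_inflate (hT : IsGDD T) {x y : (V × M) × G} (hxy : x.2 ≠ y.2) :
    ∃ s ∈ inflate M T, x ∈ s ∧ y ∈ s := by
  set π : (V × M) × G → V × G := Prod.map Prod.fst id
  have hπ : π x ≠ π y := fun h => hxy (Prod.ext_iff.1 h).2
  obtain ⟨t, ht, hxt, hyt⟩ := (hT.exists_mem_iff (π x) (π y) hπ).2 hxy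
  obtain ⟨z, hzx, hzy, rfl⟩ := exists_third_of_card_eq_three (hT.card_eq_three t ht) hxt hyt hπ
  set w : (V × M) × G := ((z.1, -(x.1.2 + y.1.2)), z.2)
  have hxy' : x ≠ y := fun h => hπ (by rw [h])
  have hwx : x ≠ w := fun h => hzx (by rw [h]; rfl)
  have hwy : y ≠ w := fun h => hzy (by rw [h]; rfl)
  refine ⟨{x, y, w}, mem_inflate.2 ⟨card_eq_three.2 ⟨x, y, w, hxy', hwx, hwy, rfl⟩,
    by simpa [π, w] using ht, ?_⟩, by simp, by simp⟩
  rw [sum_triple hxy' hwx hwy]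
  simp [w]

theorem inflate (hT : IsGDD T) : IsGDD (inflate M T) := by
  set π : (V × M) × G → V × G := Prod.map Prod.fst id
  refine ⟨fun s hs => (mem_inflate.1 hs).1, ?_, fun x y hxy => ⟨?_, hT.exists_mem_inflate⟩⟩
  · intro s hs s' hs' x y hxy hx hy hx' hy'
    obtain ⟨h3, hsT, hsum⟩ := mem_inflate.1 hs
    obtain ⟨h3', hsT', hsum'⟩ := mem_inflate.1 hs'
    have himage : s.image π = s'.image π :=
      hT.eq_of_mem _ hsT _ hsT' _ _ ((hT.injOn_of_mem_inflate hs).ne hx hy hxy)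
        (mem_image_of_mem π hx) (mem_image_of_mem π hy) (mem_image_of_mem π hx')
        (mem_image_of_mem π hy')
    obtain ⟨z, hzx, hzy, rfl⟩ := exists_third_of_card_eq_three h3 hx hy hxy
    obtain ⟨z', hzx', hzy', rfl⟩ := exists_third_of_card_eq_three h3' hx' hy' hxy
    have hπz : π z = π z' := by
      have hz : π z ∈ ({x, y, z'} : Finset _).image π := himage ▸ mem_image_of_mem π (by simp)
      simp only [image_insert, image_singleton, mem_insert, mem_singleton] at hz
      rcases hz with hz | hz | hz
      · exact absurd hz ((hT.injOn_of_mem_inflate hs).ne (by simp) (by simp) hzx)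
      · exact absurd hz ((hT.injOn_of_mem_inflate hs).ne (by simp) (by simp) hzy)
      · exact hz
    rw [sum_triple hxy hzx.symm hzy.symm] at hsum
    rw [sum_triple hxy hzx'.symm hzy'.symm] at hsum'
    have hc : z.1.2 = z'.1.2 := by rw [← add_right_inj (x.1.2 + y.1.2), hsum, hsum']
    obtain ⟨h₁, h₂⟩ := Prod.ext_iff.1 hπz
    rw [Prod.ext (Prod.ext h₁ hc) h₂]
  · rintro ⟨s, hs, hx, hy⟩ hxy₂
    exact hT.not_mem_of_leave ((hT.injOn_of_mem_inflate hs).ne hx hy hxy) hxy₂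
      (mem_image_of_mem π hx) (mem_image_of_mem π hy) (mem_inflate.1 hs).2.1

end IsGDD

end GroupDivisibleDesign

section Bose

variable {R : Type*} [CommRing R] [Invertible (2 : R)]

theorem half_add_ne_left {x y : R} (hxy : x ≠ y) : ⅟2 * (x + y) ≠ x := by
  intro h
  have h2 : (2 : R) * ⅟2 = 1 := mul_invOf_self 2
  exact hxy (by linear_combination -(2 * h) + (x + y) * h2)

theorem half_add_two_mul_sub (x z : R) : ⅟2 * (x + (2 * z - x)) = z := by
  have h2 : (2 : R) * ⅟2 = 1 := mul_invOf_self 2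
  linear_combination z * h2

theorem ne_two_mul_sub {x z : R} (hxz : x ≠ z) : x ≠ 2 * z - x := by
  intro h
  have h2 : (2 : R) * ⅟2 = 1 := mul_invOf_self 2
  have := half_add_two_mul_sub x z
  rw [← h] at this
  exact hxz (by linear_combination this - x * h2)

variable [DecidableEq R]

def boseTriangle (i : ZMod 3) (x y : R) : Finset (ZMod 3 × R) :=
  {(i, x), (i, y), (i + 1, ⅟2 * (x + y))}

theorem boseTriangle_comm (i : ZMod 3) (x y : R) : boseTriangle i x y = boseTriangle i y x := by
  rw [boseTriangle, boseTriangle, Finset.insert_comm, add_comm x y]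

theorem card_boseTriangle {i : ZMod 3} {x y : R} (hxy : x ≠ y) : (boseTriangle i x y).card = 3 := by
  have hi : i ≠ i + 1 := by revert i; decide
  exact card_eq_three.2 ⟨(i, x), (i, y), _, by simp [hxy], by simp [hi], by simp [hi], rfl⟩

theorem snd_injOn_boseTriangle {i : ZMod 3} {x y : R} (hxy : x ≠ y) :
    Set.InjOn Prod.snd (boseTriangle i x y : Set (ZMod 3 × R)) := by
  have hx := half_add_ne_left hxy
  have hy : ⅟2 * (x + y) ≠ y := add_comm x y ▸ half_add_ne_left hxy.symm
  intro p hp q hq hpq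
  simp only [boseTriangle, coe_insert, coe_singleton, Set.mem_insert_iff,
    Set.mem_singleton_iff] at hp hq
  rcases hp with rfl | rfl | rfl <;> rcases hq with rfl | rfl | rfl <;>
    simp_all [eq_comm]

def boseThrough (p q : ZMod 3 × R) : Finset (ZMod 3 × R) :=
  if p.1 = q.1 then boseTriangle p.1 p.2 q.2
  else if q.1 = p.1 + 1 then boseTriangle p.1 p.2 (2 * q.2 - p.2)
  else boseTriangle q.1 q.2 (2 * p.2 - q.2)

theorem boseTriangle_eq_boseThrough {i : ZMod 3} {x y : R} {p q : ZMod 3 × R}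
    (hp : p ∈ boseTriangle i x y) (hq : q ∈ boseTriangle i x y) (hpq : p ≠ q) :
    boseTriangle i x y = boseThrough p q := by
  have h₁ : ∀ j : ZMod 3, j ≠ j + 1 := by decide
  have h₂ : ∀ j : ZMod 3, j ≠ j + 1 + 1 := by decide
  simp only [boseTriangle, mem_insert, mem_singleton] at hp hq
  rcases hp with rfl | rfl | rfl <;> rcases hq with rfl | rfl | rfl <;>
    simp_all [boseThrough, boseTriangle_comm i x y]

variable [Fintype R]

variable (R) in
def bose : Finset (Finset (ZMod 3 × R)) :=
  univ.filter fun t => ∃ i x y, x ≠ y ∧ t = boseTriangle i x y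

theorem isGDD_bose : IsGDD (bose R) := by
  have hmem : ∀ t, t ∈ bose R ↔ ∃ i x y, x ≠ y ∧ t = boseTriangle i x y := by simp [bose]
  have hnext : ∀ {i : ZMod 3} {a b : R}, a ≠ b → ∃ t ∈ bose R, (i, a) ∈ t ∧ (i + 1, b) ∈ t :=
    fun {i a b} hab => ⟨_, (hmem _).2 ⟨i, a, 2 * b - a, ne_two_mul_sub hab, rfl⟩,
      by simp [boseTriangle], by simp [boseTriangle]⟩
  refine ⟨?_, ?_, ?_⟩
  · intro t ht
    obtain ⟨i, x, y, hxy, rfl⟩ := (hmem t).1 ht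
    exact card_boseTriangle hxy
  · intro t ht t' ht' p q hpq hp hq hp' hq'
    obtain ⟨i, x, y, -, rfl⟩ := (hmem t).1 ht
    obtain ⟨i', x', y', -, rfl⟩ := (hmem t').1 ht'
    rw [boseTriangle_eq_boseThrough hp hq hpq, boseTriangle_eq_boseThrough hp' hq' hpq]
  · rintro ⟨i, a⟩ ⟨j, b⟩ hpq
    constructor
    · rintro ⟨t, ht, hp, hq⟩ hab
      obtain ⟨i', x, y, hxy, rfl⟩ := (hmem t).1 ht
      exact hpq (snd_injOn_boseTriangle hxy hp hq hab)
    · intro hab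
      have hrows : ∀ i j : ZMod 3, j = i ∨ j = i + 1 ∨ i = j + 1 := by decide
      rcases hrows i j with rfl | rfl | rfl
      · exact ⟨_, (hmem _).2 ⟨j, a, b, hab, rfl⟩, by simp [boseTriangle]⟩
      · exact hnext hab
      · obtain ⟨t, ht, hq, hp⟩ := hnext (i := j) (Ne.symm hab)
        exact ⟨t, ht, hp, hq⟩

end Bose

/-- The triangles `{x, x + 1, x + 3}` mod `8`, whose groups are the residues mod `4`. -/
def gddTableTwoFour : Finset (Finset ℕ) :=
  {{0, 1, 3}, {1, 2, 4}, {2, 3, 5}, {3, 4, 6}, {4, 5, 7}, {5, 6, 0}, {6, 7, 1}, {7, 0, 2}}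

theorem exists_isGDD_two_four : ∃ T : Finset (Finset (Fin 2 × Fin 4)), IsGDD T :=
  ⟨_, .of_embedding (finProdFinEquiv.toEmbedding.trans Fin.valEmbedding) (T := gddTableTwoFour)
    (by decide) (by decide) (by decide) (by decide)⟩

section HoleDecomposition

variable {H V W G : Type*}

abbrev holeLeave (μ : V → V) : V ⊕ H → V ⊕ H → Prop :=
  Sum.LiftRel (fun v w => w = μ v) fun _ _ => True

variable (H V) in
/-- A triangle decomposition of `K_{V ⊕ H} - K_H - μ`, for a perfect matching `μ` of `V`. -/
def HasHoleDecomposition : Prop :=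
  ∃ μ : V → V, Function.Involutive μ ∧ (∀ v, μ v ≠ v) ∧
    ∃ T : Finset (Finset (V ⊕ H)), IsTriangleDecomposition (holeLeave μ) T

theorem hasHoleDecomposition_of_isEmpty [IsEmpty V] : HasHoleDecomposition H V := by
  refine ⟨id, fun _ => rfl, isEmptyElim, ∅, by simp, by simp, ?_⟩
  rintro (v | a) (w | b) -
  exacts [isEmptyElim v, isEmptyElim v, isEmptyElim w, by simp]

namespace HasHoleDecomposition

theorem of_equiv (e : V ≃ W) (h : HasHoleDecomposition H V) : HasHoleDecomposition H W := by
  obtain ⟨μ, hinv, hfix, T, hT⟩ := h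
  refine ⟨e ∘ μ ∘ e.symm, fun w => by simp [hinv _], fun w => ?_, _,
    (hT.map (e.sumCongr (Equiv.refl H)).toEmbedding).congr fun x y _ => ?_⟩
  · simpa [← Equiv.eq_symm_apply] using hfix (e.symm w)
  · rcases x with v | a <;> rcases y with w | b <;> simp [← Equiv.eq_symm_apply]

theorem of_card_eq [Fintype V] [Fintype W] (hcard : Fintype.card V = Fintype.card W)
    (h : HasHoleDecomposition H V) : HasHoleDecomposition H W :=
  h.of_equiv (Fintype.equivOfCardEq hcard)

/-- Fill each group `V × {g}` of the GDD with a copy of the decomposition; all copies share the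
hole `H`. -/
theorem prod [DecidableEq H] [DecidableEq V] [Fintype G] [DecidableEq G]
    (h : HasHoleDecomposition H V) {T : Finset (Finset (V × G))} (hT : IsGDD T) :
    HasHoleDecomposition H (V × G) := by
  obtain ⟨μ, hinv, hfix, D, hD⟩ := h
  let ι (g : G) : V ⊕ H ↪ (V × G) ⊕ H :=
    ⟨Sum.map (·, g) id, Sum.map_injective.2 ⟨fun _ _ h => (Prod.ext_iff.1 h).1, fun _ _ => id⟩⟩
  have hgroups := IsTriangleDecomposition.biUnion univ (fun g _ => hD.map (ι g)) (by
    rintro g - g' - hg (⟨v, k⟩ | a) (⟨w, k'⟩ | b) - <;> simp [ι] <;> grind)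
  have hall := (hT.map .inl).union hgroups (by
    rintro (⟨v, g⟩ | a) (⟨w, g'⟩ | b) - <;> simp [ι]
    tauto)
  refine ⟨Prod.map μ id, hinv.prodMap fun _ => rfl, fun x hx => hfix x.1 (Prod.ext_iff.1 hx).1,
    _, hall.congr ?_⟩
  rintro (⟨v, g⟩ | a) (⟨w, g'⟩ | b) - <;> simp [ι]
  grind

theorem prod_zmod_of_odd {M : Type*} [DecidableEq H] [AddCommGroup M] [Fintype M]
    [DecidableEq M] (h : HasHoleDecomposition H (ZMod 3 × M)) {u : ℕ} (hu : Odd u) :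
    HasHoleDecomposition H ((ZMod 3 × M) × ZMod u) := by
  have : NeZero u := ⟨hu.pos.ne'⟩
  have h2 : IsUnit (2 : ZMod u) := by
    simpa using (ZMod.isUnit_iff_coprime 2 u).2 (Nat.coprime_two_left.2 hu)
  let := h2.invertible
  exact h.prod isGDD_bose.inflate

end HasHoleDecomposition

/-- Hole point `i` is the vertex `6 + i` (`12 + i` in `holeTableTwelve`); the triangles through
it come from the `i`-th factor of a one-factorization of `K₆` whose fifth factor is `μ`. -/
def holeTableSix : Finset (Finset ℕ) :=
  {{6, 0, 1}, {6, 2, 3}, {6, 4, 5}, {7, 0, 2}, {7, 1, 4}, {7, 3, 5},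
   {8, 0, 3}, {8, 1, 5}, {8, 2, 4}, {9, 0, 4}, {9, 1, 3}, {9, 2, 5}}

theorem hasHoleDecomposition_six : HasHoleDecomposition (Fin 4) (Fin 6) :=
  ⟨![5, 2, 1, 4, 3, 0], by unfold Function.Involutive; decide, by decide, _,
    .of_embedding (finSumFinEquiv.toEmbedding.trans Fin.valEmbedding) (T := holeTableSix)
      (by decide) (by decide) (by decide) (by decide)⟩

def holeTableTwelve : Finset (Finset ℕ) :=
  {{12, 0, 6}, {12, 1, 7}, {12, 2, 4}, {12, 3, 9}, {12, 5, 10}, {12, 8, 11},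
   {13, 0, 3}, {13, 1, 6}, {13, 2, 10}, {13, 4, 8}, {13, 5, 11}, {13, 7, 9},
   {14, 0, 8}, {14, 1, 5}, {14, 2, 3}, {14, 4, 7}, {14, 6, 11}, {14, 9, 10},
   {15, 0, 10}, {15, 1, 11}, {15, 2, 9}, {15, 3, 8}, {15, 4, 5}, {15, 6, 7},
   {0, 1, 2}, {0, 5, 7}, {0, 9, 11}, {1, 3, 10}, {1, 4, 9}, {2, 5, 6},
   {2, 7, 8}, {3, 4, 6}, {3, 7, 11}, {4, 10, 11}, {5, 8, 9}, {6, 8, 10}}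

theorem hasHoleDecomposition_twelve : HasHoleDecomposition (Fin 4) (Fin 12) :=
  ⟨![4, 8, 11, 5, 0, 3, 9, 10, 1, 6, 7, 2], by unfold Function.Involutive; decide, by decide, _,
    .of_embedding (finSumFinEquiv.toEmbedding.trans Fin.valEmbedding) (T := holeTableTwelve)
      (by decide) (by decide) (by decide) (by decide)⟩

theorem hasHoleDecomposition_fin_six_mul (k : ℕ) :
    HasHoleDecomposition (Fin 4) (Fin (6 * k)) := by
  induction k using Nat.strong_induction_on with
  | _ k ih =>
  obtain rfl | hk := eq_or_ne k 0
  · rw [mul_zero]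
    exact hasHoleDecomposition_of_isEmpty
  rcases Nat.even_or_odd k with ⟨u, rfl⟩ | hk_odd
  · rcases Nat.even_or_odd u with ⟨j, rfl⟩ | hu
    · have : NeZero (3 * j) := ⟨by omega⟩
      obtain ⟨T, hT⟩ := exists_isGDD_two_four
      have hgroup : HasHoleDecomposition (Fin 4) (Fin 2 × ZMod (3 * j)) :=
        (ih j (by omega)).of_card_eq (by simp; ring)
      exact (hgroup.prod (hT.inflate (M := ZMod (3 * j)))).of_card_eq (by simp; ring)
    · have : NeZero u := ⟨hu.pos.ne'⟩
      have hgroup : HasHoleDecomposition (Fin 4) (ZMod 3 × ZMod 4) :=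
        hasHoleDecomposition_twelve.of_card_eq (by simp)
      exact (hgroup.prod_zmod_of_odd hu).of_card_eq (by simp; ring)
  · have : NeZero k := ⟨hk⟩
    have hgroup : HasHoleDecomposition (Fin 4) (ZMod 3 × ZMod 2) :=
      hasHoleDecomposition_six.of_card_eq (by simp)
    exact (hgroup.prod_zmod_of_odd hk_odd).of_card_eq (by simp)

end HoleDecomposition

section Assembly

variable {H V : Type*} [DecidableEq H] [DecidableEq V]

theorem matchingPair_eq_iff {μ : V → V} (hinv : Function.Involutive μ) {v w : V} :
    ({.inl w, .inl (μ w)} : Finset (V ⊕ H)) = {.inl v, .inl (μ v)} ↔ w = v ∨ w = μ v := by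
  constructor
  · intro h
    have : (.inl w : V ⊕ H) ∈ ({.inl v, .inl (μ v)} : Finset (V ⊕ H)) := h ▸ by simp
    simpa using this
  · rintro (rfl | rfl)
    · rfl
    · rw [hinv, pair_comm]

variable (V) in
def holeTriangle (i : Fin 4) : Finset (V ⊕ Fin 4) :=
  ({0, 1, i} : Finset (Fin 4)).map .inr

theorem card_insert_holeTriangle {μ : V → V} {D : Finset (Finset (V ⊕ Fin 4))}
    (hD : IsTriangleDecomposition (holeLeave μ) D) :
    (insert (holeTriangle V 3) (insert (holeTriangle V 2) D)).card = D.card + 2 := by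
  have hnot : ∀ i : Fin 4, i ≠ 0 → holeTriangle V i ∉ D := fun i hi =>
    hD.not_mem_of_leave (x := .inr 0) (y := .inr i) (by simpa using hi.symm) (.inr trivial)
      (by simp [holeTriangle]) (by simp [holeTriangle])
  rw [card_insert_of_notMem, card_insert_of_notMem (hnot 2 (by decide))]
  rw [mem_insert, not_or]
  exact ⟨by simp only [holeTriangle, map_inj]; decide, hnot 3 (by decide)⟩

variable [Fintype V]

def matchingPairs (μ : V → V) : Finset (Finset (V ⊕ H)) :=
  univ.image fun v => {.inl v, .inl (μ v)}

theorem two_mul_card_matchingPairs {μ : V → V} (hinv : Function.Involutive μ)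
    (hfix : ∀ v, μ v ≠ v) : 2 * (matchingPairs (H := H) μ).card = Fintype.card V := by
  rw [← card_univ, card_eq_sum_card_image (fun v => ({.inl v, .inl (μ v)} : Finset (V ⊕ H))) univ,
    matchingPairs, mul_comm, sum_const_nat]
  intro p hp
  obtain ⟨v, -, rfl⟩ := mem_image.1 hp
  rw [← card_pair (hfix v).symm]
  congr 1
  ext w
  simp [matchingPair_eq_iff hinv]

theorem matchingPairs_pairwise_disjoint {μ : V → V} (hinv : Function.Involutive μ) :
    ∀ p ∈ matchingPairs (H := H) μ, ∀ q ∈ matchingPairs (H := H) μ, p ≠ q → Disjoint p q := by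
  simp only [matchingPairs, mem_image, mem_univ, true_and]
  rintro _ ⟨v, rfl⟩ _ ⟨w, rfl⟩ hne
  refine disjoint_left.2 fun x hx hx' => hne ?_
  rw [eq_comm, matchingPair_eq_iff hinv]
  simp only [mem_insert, mem_singleton] at hx hx'
  rcases hx with rfl | rfl <;> rcases hx' with h | h <;> simp only [Sum.inl.injEq] at h <;>
    grind [Function.Involutive]

theorem disjoint_map_inr_of_mem_matchingPairs {μ : V → V} {p : Finset (V ⊕ H)}
    (hp : p ∈ matchingPairs μ) (q : Finset H) : Disjoint (q.map .inr) p := by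
  obtain ⟨v, -, rfl⟩ := mem_image.1 hp
  simp [disjoint_left]

theorem not_subset_map_inr_of_mem_matchingPairs {μ : V → V} {p : Finset (V ⊕ H)}
    (hp : p ∈ matchingPairs μ) (q : Finset H) : ¬ p ⊆ q.map .inr := by
  obtain ⟨v, -, rfl⟩ := mem_image.1 hp
  simp [insert_subset_iff]

variable (H V) in
def holePairs [Fintype H] : Finset (Finset (V ⊕ H)) :=
  (univ.powersetCard 2).map (mapEmbedding .inr).toEmbedding

theorem IsTriangleDecomposition.uncoveredPairs_eq [Fintype H] {μ : V → V} (hfix : ∀ v, μ v ≠ v)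
    {D : Finset (Finset (V ⊕ H))} (hD : IsTriangleDecomposition (holeLeave μ) D) :
    uncoveredPairs univ D = holePairs H V ∪ matchingPairs μ := by
  ext p
  constructor
  · intro hp
    obtain ⟨x, y, hxy, rfl⟩ := card_eq_two.1 (mem_uncoveredPairs.1 hp).2.1
    rw [hD.pair_mem_uncoveredPairs_iff hxy] at hp
    rcases x with v | a <;> rcases y with w | b <;> simp only [holeLeave, Sum.liftRel_inl_inl,
      Sum.not_liftRel_inl_inr, Sum.not_liftRel_inr_inl, Sum.liftRel_inr_inr] at hp
    · exact mem_union_right _ (mem_image.2 ⟨v, mem_univ _, by rw [hp]⟩)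
    · refine mem_union_left _ (mem_map.2 ⟨{a, b}, ?_, by simp⟩)
      simp [card_pair (Sum.inr_injective.ne_iff.1 hxy)]
  · intro hp
    rcases mem_union.1 hp with hp | hp
    · obtain ⟨q, hq, rfl⟩ := mem_map.1 hp
      obtain ⟨a, b, hab, rfl⟩ := card_eq_two.1 (mem_powersetCard.1 hq).2
      simpa using (hD.pair_mem_uncoveredPairs_iff (Sum.inr_injective.ne hab)).2 (.inr trivial)
    · obtain ⟨v, -, rfl⟩ := mem_image.1 hp
      exact (hD.pair_mem_uncoveredPairs_iff (by simpa using (hfix v).symm)).2 (.inl rfl)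

theorem uncoveredPairs_insert_holeTriangle {μ : V → V} (hfix : ∀ v, μ v ≠ v)
    {D : Finset (Finset (V ⊕ Fin 4))} (hD : IsTriangleDecomposition (holeLeave μ) D) :
    uncoveredPairs univ (insert (holeTriangle V 3) (insert (holeTriangle V 2) D)) =
      insert (({2, 3} : Finset (Fin 4)).map .inr) (matchingPairs μ) := by
  have hK : ((univ : Finset (Fin 4)).powersetCard 2).filter
      (fun q => ¬ q ⊆ {0, 1, 2} ∧ ¬ q ⊆ {0, 1, 3}) = {{2, 3}} := by decide
  have hholes : (holePairs (Fin 4) V).filter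
      (fun p => ¬ p ⊆ holeTriangle V 2 ∧ ¬ p ⊆ holeTriangle V 3) =
        {({2, 3} : Finset (Fin 4)).map .inr} := by
    rw [holePairs, filter_map]
    simp only [holeTriangle, Function.comp_def, RelEmbedding.coe_toEmbedding, mapEmbedding_apply,
      map_subset_map, hK, map_singleton]
  rw [uncoveredPairs_insert, uncoveredPairs_insert, hD.uncoveredPairs_eq hfix, filter_filter,
    filter_union, hholes, filter_true_of_mem fun p hp =>
      ⟨not_subset_map_inr_of_mem_matchingPairs hp _, not_subset_map_inr_of_mem_matchingPairs hp _⟩]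
  exact (insert_eq _ _).symm

theorem IsTriangleDecomposition.six_mul_card_eq {μ : V → V} (hinv : Function.Involutive μ)
    (hfix : ∀ v, μ v ≠ v) {D : Finset (Finset (V ⊕ Fin 4))}
    (hD : IsTriangleDecomposition (holeLeave μ) D) :
    6 * D.card = Fintype.card V ^ 2 + 6 * Fintype.card V := by
  have hcount := hD.three_mul_card_add_card_uncoveredPairs
  rw [hD.uncoveredPairs_eq hfix, card_union_of_disjoint (disjoint_left.2 fun p hp hp' => by
      obtain ⟨q, -, rfl⟩ := mem_map.1 hp
      exact not_subset_map_inr_of_mem_matchingPairs hp' q subset_rfl), Fintype.card_sum,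
    Fintype.card_fin] at hcount
  have hholes : (holePairs (Fin 4) V).card = 6 := by simp [holePairs]; rfl
  have hM := two_mul_card_matchingPairs (H := Fin 4) hinv hfix
  have h2C := Nat.add_one_mul_choose_eq (Fintype.card V + 3) 1
  simp only [Nat.choose_one_right] at h2C
  nlinarith

theorem HasHoleDecomposition.exists_packing (h : HasHoleDecomposition (Fin 4) V) :
    ∃ T : Finset (Finset (V ⊕ Fin 4)), IsTripleFamily univ T ∧
      6 * T.card = Fintype.card V ^ 2 + 6 * Fintype.card V + 12 ∧
      2 * (uncoveredPairs univ T).card = Fintype.card V + 2 ∧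
      ∀ p ∈ uncoveredPairs univ T, ∀ q ∈ uncoveredPairs univ T, p ≠ q → Disjoint p q := by
  obtain ⟨μ, hinv, hfix, D, hD⟩ := h
  have he : ({2, 3} : Finset (Fin 4)).map .inr ∉ matchingPairs μ := fun he =>
    not_subset_map_inr_of_mem_matchingPairs he _ subset_rfl
  refine ⟨insert (holeTriangle V 3) (insert (holeTriangle V 2) D), ?_, ?_, ?_, ?_⟩
  · intro t ht
    simp only [mem_insert] at ht
    rcases ht with rfl | rfl | ht
    · exact ⟨subset_univ _, by simp [holeTriangle]⟩
    · exact ⟨subset_univ _, by simp [holeTriangle]⟩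
    · exact ⟨subset_univ _, hD.card_eq_three t ht⟩
  · rw [card_insert_holeTriangle hD]
    linarith [hD.six_mul_card_eq hinv hfix]
  · rw [uncoveredPairs_insert_holeTriangle hfix hD, card_insert_of_notMem he]
    linarith [two_mul_card_matchingPairs (H := Fin 4) hinv hfix]
  · rw [uncoveredPairs_insert_holeTriangle hfix hD]
    intro p hp q hq hpq
    rcases mem_insert.1 hp with rfl | hp <;> rcases mem_insert.1 hq with rfl | hq
    · exact absurd rfl hpq
    · exact disjoint_map_inr_of_mem_matchingPairs hq _
    · exact (disjoint_map_inr_of_mem_matchingPairs hp _).symm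
    · exact matchingPairs_pairwise_disjoint hinv p hp q hq hpq

end Assembly

theorem packing_4_mod_6 (a : ℕ) (ha : a % 6 = 4) :
    ∃ T : Finset (Finset ℕ), IsTripleFamily (Finset.Icc 1 a) T ∧
      T.card = (a ^ 2 - 2 * a + 4) / 6 ∧
      (uncoveredPairs (Finset.Icc 1 a) T).card = (a - 2) / 2 ∧
      ∀ p ∈ uncoveredPairs (Finset.Icc 1 a) T, ∀ q ∈ uncoveredPairs (Finset.Icc 1 a) T,
        p ≠ q → Disjoint p q := by
  obtain ⟨k, rfl⟩ : ∃ k, a = 6 * k + 4 := ⟨a / 6, by omega⟩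
  obtain ⟨T, hT, hcard, huncov, hdisj⟩ := (hasHoleDecomposition_fin_six_mul k).exists_packing
  rw [Fintype.card_fin] at hcard huncov
  have hIcc : (Icc 1 (6 * k + 4)).card = 6 * k + 4 := by simp
  set f := finSumFinEquiv.toEmbedding.trans ((Icc 1 (6 * k + 4)).orderEmbOfFin hIcc).toEmbedding
  have hf : univ.map f = Icc 1 (6 * k + 4) := by
    rw [← map_map, map_univ_equiv, map_orderEmbOfFin_univ]
  refine ⟨T.map (mapEmbedding f).toEmbedding, hf ▸ hT.map f, ?_, ?_, ?_⟩
  · have : (6 * k + 4) ^ 2 = (6 * k) ^ 2 + 8 * (6 * k) + 16 := by ring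
    rw [card_map]
    omega
  · rw [← hf, uncoveredPairs_map, card_map]
    omega
  · rw [← hf, uncoveredPairs_map]
    simp only [mem_map, RelEmbedding.coe_toEmbedding, mapEmbedding_apply]
    rintro _ ⟨p, hp, rfl⟩ _ ⟨q, hq, rfl⟩ hpq
    exact (disjoint_map f).2 (hdisj p hp q hq fun h => hpq (h ▸ rfl))
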